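/- arXiv:1611.05205 — 5 statements merged into one kernel-verified Lean document; each statement's English description precedes it below -/
import Mathlib

section
/- For D > 0 define the piecewise-linear paths f̄(t) = t for 0 ≤ t ≤ D and f̄(t) = 2D − t for D ≤ t ≤ 3D; and ḡ(t) = t for 0 ≤ t ≤ D/2, ḡ(t) = D − t for D/2 ≤ t ≤ D, ḡ(t) = t − D for D ≤ t ≤ 2D, ḡ(t) = 3D − t for 2D ≤ t ≤ 3D. Then the four meeting times min{t : ±f̄(t) ± ḡ(t) = D} are exactly D/2, D, 2D, 3D, and hence R(f̄, ḡ) = (1/4)(D/2 + D + 2D + 3D) = 13D/8. -/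
/-- Meeting time of Player I (path `f`) with the agent of Player II whose path
is `s₁ * D + s₂ * g t`; i.e. `min {t : ±f(t) ± g(t) = D}` with the
correspondence t¹ ↔ (1,-1), t² ↔ (-1,-1), t³ ↔ (-1,1), t⁴ ↔ (1,1). -/
noncomputable def meetTime (D : ℝ) (f g : ℝ → ℝ) (s₁ s₂ : ℝ) : ℝ :=
  sInf {t : ℝ | 0 ≤ t ∧ f t = s₁ * D + s₂ * g t}

/-- The Alpern–Gal path of Player I: forward until time `D`, then backward. -/
noncomputable def fbar (D : ℝ) : ℝ → ℝ := fun t => if t ≤ D then t else 2 * D - t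

/-- The Alpern–Gal path of Player II: turns at times `D/2`, `D`, `2D`. -/
noncomputable def gbar (D : ℝ) : ℝ → ℝ := fun t =>
  if t ≤ D / 2 then t
  else if t ≤ D then D - t
  else if t ≤ 2 * D then t - D
  else 3 * D - t


lemma meetTime_eq {D : ℝ} {f g : ℝ → ℝ} {s₁ s₂ c : ℝ}
    (hc : 0 ≤ c) (hmem : f c = s₁ * D + s₂ * g c)
    (hlb : ∀ t, 0 ≤ t → f t = s₁ * D + s₂ * g t → c ≤ t) :
    meetTime D f g s₁ s₂ = c := by
  refine le_antisymm (csInf_le ⟨c, fun t ht => hlb t ht.1 ht.2⟩ ⟨hc, hmem⟩) ?_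
  exact le_csInf ⟨c, hc, hmem⟩ fun t ht => hlb t ht.1 ht.2

/-- Alpern–Gal (1995): for the optimal pair the four meeting times are
`D/2, D, 2D, 3D` (namely t¹ = D/2, t⁴ = D, t³ = 2D, t² = 3D) so the
rendezvous value is `13D/8`. -/
theorem alpernGal_meeting_times (D : ℝ) (hD : 0 < D) :
    meetTime D (fbar D) (gbar D) 1 (-1) = D / 2 ∧
    meetTime D (fbar D) (gbar D) 1 1 = D ∧
    meetTime D (fbar D) (gbar D) (-1) 1 = 2 * D ∧
    meetTime D (fbar D) (gbar D) (-1) (-1) = 3 * D ∧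
    (meetTime D (fbar D) (gbar D) 1 (-1) + meetTime D (fbar D) (gbar D) 1 1 +
     meetTime D (fbar D) (gbar D) (-1) 1 + meetTime D (fbar D) (gbar D) (-1) (-1)) / 4
      = 13 * D / 8 := by
  have h1 : meetTime D (fbar D) (gbar D) 1 (-1) = D / 2 := by
    apply meetTime_eq (by linarith)
    · simp only [fbar, gbar]; split_ifs <;> (try push_neg at *) <;> linarith
    · intro t ht heq
      by_contra h; push_neg at h
      simp only [fbar, gbar] at heq; split_ifs at heq <;> (try push_neg at *) <;> linarith
  have h2 : meetTime D (fbar D) (gbar D) 1 1 = D := by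
    apply meetTime_eq (by linarith)
    · simp only [fbar, gbar]; split_ifs <;> (try push_neg at *) <;> linarith
    · intro t ht heq
      by_contra h; push_neg at h
      simp only [fbar, gbar] at heq; split_ifs at heq <;> (try push_neg at *) <;> linarith
  have h3 : meetTime D (fbar D) (gbar D) (-1) 1 = 2 * D := by
    apply meetTime_eq (by linarith)
    · simp only [fbar, gbar]; split_ifs <;> (try push_neg at *) <;> linarith
    · intro t ht heq
      by_contra h; push_neg at h
      simp only [fbar, gbar] at heq; split_ifs at heq <;> (try push_neg at *) <;> linarith
  have h4 : meetTime D (fbar D) (gbar D) (-1) (-1) = 3 * D := by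
    apply meetTime_eq (by linarith)
    · simp only [fbar, gbar]; split_ifs <;> (try push_neg at *) <;> linarith
    · intro t ht heq
      by_contra h; push_neg at h
      simp only [fbar, gbar] at heq; split_ifs at heq <;> (try push_neg at *) <;> linarith
  refine ⟨h1, h2, h3, h4, ?_⟩
  rw [h1, h2, h3, h4]; ring
end

section
/- Let x : [0, ∞) → ℝ satisfy x(l) ≥ x(l + α) − α for all l ≥ 0, α > 0. Given a regular mesh d_i = d_0 + iα (i = 0, …, N), set x_min = min_i x(d_i). Then inf{x(l) : l ∈ [d_0, d_N]} ∈ [x_min − α, x_min], and any l ∈ [d_{i−1}, d_i] with x(d_i) − α > x_min satisfies x(l) > x_min, i.e. the infimum over [d_0,d_N] is attained (up to x_min) only on intervals [d_{i−1}, d_i] with x(d_i) − α ≤ x_min. -/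
/-- Bounding the optimal solution from mesh values: if `x` satisfies the delay
inequality `x(l) ≥ x(l + a) − a` and `d i = d 0 + i·α` is a regular mesh with
minimum value `x_min` over the mesh points `d 0, …, d N`, then the infimum of
`x` over `[d 0, d N]` lies in `[x_min − α, x_min]`, and on any mesh interval
`[d (i−1), d i]` with `x(d i) − α > x_min` the value of `x` stays above
`x_min`. -/
theorem mesh_bound_one_gift (x : ℝ → ℝ) (α : ℝ) (hα : 0 < α)
    (hdelay : ∀ l : ℝ, 0 ≤ l → ∀ a : ℝ, 0 < a → x l ≥ x (l + a) - a)
    (N : ℕ) (hN : 0 < N) (d : ℕ → ℝ) (hd0 : 0 ≤ d 0)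
    (hmesh : ∀ i : ℕ, d i = d 0 + i * α)
    (xmin : ℝ) (hxmin : IsLeast (x '' (d '' {i : ℕ | i ≤ N})) xmin) :
    (xmin - α ≤ sInf (x '' Set.Icc (d 0) (d N)) ∧
      sInf (x '' Set.Icc (d 0) (d N)) ≤ xmin) ∧
    (∀ i : ℕ, 1 ≤ i → i ≤ N → xmin < x (d i) - α →
      ∀ l ∈ Set.Icc (d (i - 1)) (d i), xmin < x l) := by
  -- key lemma: for 0 ≤ l ≤ d i, x l ≥ x (d i) - (d i - l)
  have hkey : ∀ l : ℝ, 0 ≤ l → ∀ i : ℕ, l ≤ d i → x (d i) - (d i - l) ≤ x l := by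
    intro l hl i hli
    rcases eq_or_lt_of_le hli with h | h
    · simp [h]
    · have := hdelay l hl (d i - l) (by linarith)
      have he : l + (d i - l) = d i := by ring
      rw [he] at this
      linarith
  -- xmin is a lower bound at mesh points
  have hmeshge : ∀ i : ℕ, i ≤ N → xmin ≤ x (d i) := by
    intro i hi
    exact hxmin.2 ⟨d i, ⟨i, hi, rfl⟩, rfl⟩
  have hd0N : d 0 ≤ d N := by
    have := hmesh N
    have : (0:ℝ) ≤ (N:ℝ) * α := by positivity
    rw [hmesh N]; linarith
  -- every value on [d 0, d N] is ≥ xmin - α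
  have hlb : ∀ l : ℝ, l ∈ Set.Icc (d 0) (d N) → xmin - α ≤ x l := by
    intro l ⟨hl0, hlN⟩
    have hl : 0 ≤ l := le_trans hd0 hl0
    set t : ℝ := (l - d 0) / α with ht
    have ht0 : 0 ≤ t := div_nonneg (by linarith) hα.le
    set i : ℕ := ⌈t⌉₊ with hi
    have hiN : i ≤ N := by
      rw [hi, Nat.ceil_le, ht, div_le_iff₀ hα]
      rw [hmesh N] at hlN; linarith
    have hle : l ≤ d i := by
      have := Nat.le_ceil t
      rw [ht, div_le_iff₀ hα] at this
      rw [hmesh i]; linarith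
    have hclose : d i - l ≤ α := by
      have h := Nat.ceil_lt_add_one ht0
      rw [ht] at h
      have h2 : (↑⌈(l - d 0) / α⌉₊ : ℝ) * α < ((l - d 0) / α + 1) * α :=
        mul_lt_mul_of_pos_right h hα
      rw [add_mul, div_mul_cancel₀ _ hα.ne', one_mul] at h2
      rw [hmesh i]; linarith
    have h1 := hkey l hl i hle
    have h2 := hmeshge i hiN
    linarith
  have hne : (x '' Set.Icc (d 0) (d N)).Nonempty :=
    ⟨x (d 0), ⟨d 0, ⟨le_refl _, hd0N⟩, rfl⟩⟩
  have hbdd : BddBelow (x '' Set.Icc (d 0) (d N)) := by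
    refine ⟨xmin - α, ?_⟩
    rintro y ⟨l, hl, rfl⟩
    exact hlb l hl
  constructor
  · constructor
    · exact le_csInf hne (by rintro y ⟨l, hl, rfl⟩; exact hlb l hl)
    · obtain ⟨w, hw, hy⟩ := hxmin.1
      obtain ⟨j, hj, hz⟩ := hw
      refine csInf_le hbdd ⟨d j, ⟨?_, ?_⟩, by rw [hz, hy]⟩
      · rw [hmesh j]
        have : (0:ℝ) ≤ (j:ℝ) * α := by positivity
        linarith
      · rw [hmesh j, hmesh N]
        have : (j:ℝ) ≤ (N:ℝ) := Nat.cast_le.mpr hj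
        nlinarith
  · intro i hi1 hiN hgap l ⟨hl1, hl2⟩
    have hl0 : 0 ≤ l := by
      have : d 0 ≤ d (i-1) := by
        rw [hmesh (i-1)]
        have : (0:ℝ) ≤ ((i-1:ℕ):ℝ) * α := by positivity
        linarith
      linarith
    have h1 := hkey l hl0 i hl2
    have hclose : d i - l ≤ α := by
      have : d (i-1) = d i - α := by
        rw [hmesh (i-1), hmesh i]
        have : ((i-1 : ℕ) : ℝ) = (i:ℝ) - 1 := by
          rw [Nat.cast_sub hi1]; simp
        rw [this]; ring
      linarith
    linarith
end

section
/- Let x : [0,∞)² → ℝ satisfy: (i) x(l₁, l₂) ≥ x(l₁ + α, l₂) − α whenever l₁ ≥ l₂; (ii) x(l₁, l₂) ≥ x(l₁ + α, l₂ + α) − α for all l₁, l₂; (iii) x(l₁, l₂) ≥ x(l₁, l₂ + α) − α whenever l₂ ≥ l₁. If l₁ ≥ l₂ + α and x(l₁ + α, l₂) ≥ x_min + 2α, then x(l₁ − β, l₂ − γ) ≥ x_min for all 0 ≤ β, γ ≤ α. -/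
/-- Excluding dropping-time regions in the two-gift games (case `l₁ ≥ l₂ + α`):
if `x` satisfies (i) `x(l₁,l₂) ≥ x(l₁+a,l₂) − a` when `l₁ ≥ l₂`,
(ii) `x(l₁,l₂) ≥ x(l₁+a,l₂+a) − a`, (iii) `x(l₁,l₂) ≥ x(l₁,l₂+a) − a` when
`l₂ ≥ l₁`, and `x(l₁+α, l₂) ≥ xmin + 2α`, then `x(l₁−β, l₂−γ) ≥ xmin` for all
`0 ≤ β, γ ≤ α`. -/
theorem exclude_region_case1 (x : ℝ → ℝ → ℝ) (α xmin l₁ l₂ : ℝ) (hα : 0 < α)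
    (h1 : ∀ m₁ m₂ : ℝ, m₂ ≤ m₁ → ∀ a : ℝ, 0 < a → x m₁ m₂ ≥ x (m₁ + a) m₂ - a)
    (h2 : ∀ m₁ m₂ : ℝ, ∀ a : ℝ, 0 < a → x m₁ m₂ ≥ x (m₁ + a) (m₂ + a) - a)
    (h3 : ∀ m₁ m₂ : ℝ, m₁ ≤ m₂ → ∀ a : ℝ, 0 < a → x m₁ m₂ ≥ x m₁ (m₂ + a) - a)
    (hl : l₂ + α ≤ l₁) (hbig : x (l₁ + α) l₂ ≥ xmin + 2 * α) :
    ∀ β γ : ℝ, 0 ≤ β → β ≤ α → 0 ≤ γ → γ ≤ α → x (l₁ - β) (l₂ - γ) ≥ xmin := by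
  intro β γ hβ0 hβα hγ0 hγα
  -- Step 1: x(l₁-β, l₂-γ) ≥ x(l₁-β+γ, l₂) - γ
  have step1 : x (l₁ - β) (l₂ - γ) ≥ x (l₁ - β + γ) l₂ - γ := by
    rcases eq_or_lt_of_le hγ0 with h | h
    · simp [← h]
    · have := h2 (l₁ - β) (l₂ - γ) γ h
      have e : l₂ - γ + γ = l₂ := by ring
      rwa [e] at this
  -- Step 2: x(l₁-β+γ, l₂) ≥ x(l₁+α, l₂) - (α+β-γ)
  have step2 : x (l₁ - β + γ) l₂ ≥ x (l₁ + α) l₂ - (α + β - γ) := by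
    rcases eq_or_lt_of_le (show (0:ℝ) ≤ α + β - γ by linarith) with h | h
    · have e : l₁ - β + γ = l₁ + α := by linarith
      rw [e]; linarith
    · have hle : l₂ ≤ l₁ - β + γ := by linarith
      have := h1 (l₁ - β + γ) l₂ hle (α + β - γ) h
      have e : l₁ - β + γ + (α + β - γ) = l₁ + α := by ring
      rwa [e] at this
  linarith
end

section
/- Let x : [0,∞)² → ℝ satisfy: x(l₁, l₂) ≥ x(l₁ + α, l₂ + α) − α for all l₁, l₂; x(l₁, l₂) ≥ x(l₁ + α, l₂) − α whenever l₁ ≥ l₂; and x(l₁, l₂) ≥ x(l₁, l₂ + α) − α whenever l₂ ≥ l₁. If l₁ = l₂ = l and min(x(l + α, l), x(l, l + α)) ≥ x_min + 2α, then x(l − β, l − γ) ≥ x_min for all 0 ≤ β, γ ≤ α. -/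
/-- Excluding dropping-time regions in the two-gift games (diagonal case
`l₁ = l₂ = l`): if `x` satisfies `x(l₁,l₂) ≥ x(l₁+a,l₂+a) − a` for all `l₁,l₂`,
`x(l₁,l₂) ≥ x(l₁+a,l₂) − a` whenever `l₁ ≥ l₂`, and
`x(l₁,l₂) ≥ x(l₁,l₂+a) − a` whenever `l₂ ≥ l₁`, and
`min (x(l+α, l), x(l, l+α)) ≥ x_min + 2α`, then `x(l−β, l−γ) ≥ x_min` for all
`0 ≤ β, γ ≤ α`. -/
theorem exclude_region_diagonal (x : ℝ → ℝ → ℝ) (α xmin l : ℝ) (hα : 0 < α)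
    (h1 : ∀ m₁ m₂ : ℝ, m₂ ≤ m₁ → ∀ a : ℝ, 0 < a → x m₁ m₂ ≥ x (m₁ + a) m₂ - a)
    (h2 : ∀ m₁ m₂ : ℝ, ∀ a : ℝ, 0 < a → x m₁ m₂ ≥ x (m₁ + a) (m₂ + a) - a)
    (h3 : ∀ m₁ m₂ : ℝ, m₁ ≤ m₂ → ∀ a : ℝ, 0 < a → x m₁ m₂ ≥ x m₁ (m₂ + a) - a)
    (hbig : min (x (l + α) l) (x l (l + α)) ≥ xmin + 2 * α) :
    ∀ β γ : ℝ, 0 ≤ β → β ≤ α → 0 ≤ γ → γ ≤ α → x (l - β) (l - γ) ≥ xmin := by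
  have h1' : ∀ m₁ m₂ : ℝ, m₂ ≤ m₁ → ∀ a : ℝ, 0 ≤ a → x m₁ m₂ ≥ x (m₁ + a) m₂ - a := by
    intro m₁ m₂ hm a ha
    rcases ha.eq_or_lt with h | h
    · simp [← h]
    · exact h1 m₁ m₂ hm a h
  have h2' : ∀ m₁ m₂ : ℝ, ∀ a : ℝ, 0 ≤ a → x m₁ m₂ ≥ x (m₁ + a) (m₂ + a) - a := by
    intro m₁ m₂ a ha
    rcases ha.eq_or_lt with h | h
    · simp [← h]
    · exact h2 m₁ m₂ a h
  have h3' : ∀ m₁ m₂ : ℝ, m₁ ≤ m₂ → ∀ a : ℝ, 0 ≤ a → x m₁ m₂ ≥ x m₁ (m₂ + a) - a := by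
    intro m₁ m₂ hm a ha
    rcases ha.eq_or_lt with h | h
    · simp [← h]
    · exact h3 m₁ m₂ hm a h
  intro β γ hβ0 hβα hγ0 hγα
  rcases le_total γ β with hle | hle
  · have A := h2' (l - β) (l - γ) β hβ0
    have e1 : l - β + β = l := by ring
    rw [e1] at A
    have B := h3' l (l - γ + β) (by linarith) (α - (β - γ)) (by linarith)
    have e2 : l - γ + β + (α - (β - γ)) = l + α := by ring
    rw [e2] at B
    have C : x l (l + α) ≥ xmin + 2 * α :=
      le_trans (le_trans hbig (min_le_right _ _)) le_rfl
    linarith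
  · have A := h2' (l - β) (l - γ) γ hγ0
    have e1 : l - γ + γ = l := by ring
    rw [e1] at A
    have B := h1' (l - β + γ) l (by linarith) (α - (γ - β)) (by linarith)
    have e2 : l - β + γ + (α - (γ - β)) = l + α := by ring
    rw [e2] at B
    have C : x (l + α) l ≥ xmin + 2 * α :=
      le_trans (le_trans hbig (min_le_left _ _)) le_rfl
    linarith
end

section
/- Let f : [0,T] → ℝ be 1-Lipschitz with f(0) = 0, and suppose f(c) is reached at time c but there exists a time interval [b, c] on which f does not move at unit speed in a fixed direction (i.e. |f(c) − f(b)| < c − b). Then there exists e > 0 and a modified 1-Lipschitz path f̂ agreeing with f outside (b, c), with f̂(c − e) = f(c), f̂ constant equal to f(c) on [c − e, c], and f̂(t) = f(t) for t ≥ c. -/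
private lemma min_lip (d a a' : ℝ) : |min a d - min a' d| ≤ |a - a'| := by
  rcases le_total a d with h | h <;> rcases le_total a' d with h' | h' <;>
    rw [abs_sub_le_iff] <;> constructor <;>
    simp only [min_eq_left, min_eq_right, h, h'] <;>
    cases' abs_sub_le_iff.mp (le_refl |a - a'|) with h1 h2 <;> linarith

/-- Path-surgery lemma: a 1-Lipschitz path `f` on `[0, T]` that does not move
at unit speed in a fixed direction on `[b, c]` (i.e. `|f(c) − f(b)| < c − b`)
can be modified only inside `(b, c)` to a 1-Lipschitz path `f̂` that reaches
`f(c)` already at some earlier time `c − e` (with `e > 0`) and waits there,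
agreeing with `f` outside `(b, c)`; in particular `f̂(t) = f(t)` for `t ≥ c`. -/
theorem path_surgery (T b c : ℝ) (f : ℝ → ℝ)
    (hf : LipschitzOnWith 1 f (Set.Icc 0 T)) (hf0 : f 0 = 0)
    (hb : 0 ≤ b) (hbc : b < c) (hcT : c ≤ T)
    (hslow : |f c - f b| < c - b) :
    ∃ e : ℝ, 0 < e ∧ ∃ fh : ℝ → ℝ,
      LipschitzOnWith 1 fh (Set.Icc 0 T) ∧
      (∀ t : ℝ, t ∉ Set.Ioo b c → fh t = f t) ∧
      fh (c - e) = f c ∧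
      (∀ t ∈ Set.Icc (c - e) c, fh t = f c) ∧
      (∀ t : ℝ, c ≤ t → fh t = f t) := by
  set d : ℝ := |f c - f b| with hd
  set s : ℝ := if f c - f b = 0 then 0 else (f c - f b) / d with hs
  have hd0 : 0 ≤ d := abs_nonneg _
  have hsd : s * d = f c - f b := by
    by_cases h : f c - f b = 0
    · simp [hs, h, hd, abs_eq_zero]
    · have hdne : d ≠ 0 := by simpa [hd, abs_eq_zero] using h
      rw [hs, if_neg h, div_mul_cancel₀ _ hdne]
  have hs1 : |s| ≤ 1 := by
    by_cases h : f c - f b = 0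
    · simp [hs, h]
    · have hdne : d ≠ 0 := by simpa [hd, abs_eq_zero] using h
      rw [hs, if_neg h, abs_div, hd, abs_abs, div_self (abs_ne_zero.mpr h)]
  set e : ℝ := c - b - d with he
  have he0 : 0 < e := by simp only [he]; linarith
  set g : ℝ → ℝ := fun t => f b + s * min (t - b) d with hgdef
  have hg : ∀ t t' : ℝ, |g t - g t'| ≤ |t - t'| := by
    intro t t'
    have h1 : g t - g t' = s * (min (t - b) d - min (t' - b) d) := by
      simp only [hgdef]; ring
    rw [h1, abs_mul]
    calc |s| * |min (t - b) d - min (t' - b) d| ≤ 1 * |(t - b) - (t' - b)| := by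
          apply mul_le_mul hs1 (min_lip d _ _) (abs_nonneg _) zero_le_one
      _ = |t - t'| := by rw [one_mul]; ring_nf
  have hgb : g b = f b := by
    simp only [hgdef, sub_self, min_eq_left hd0, mul_zero, add_zero]
  have hgc : ∀ t : ℝ, b + d ≤ t → g t = f c := by
    intro t ht
    simp only [hgdef, min_eq_right (by linarith : d ≤ t - b), hsd]; ring
  set fh : ℝ → ℝ := fun t => if t ∈ Set.Ioo b c then g t else f t with hfh
  have hout : ∀ t : ℝ, t ∉ Set.Ioo b c → fh t = f t := by
    intro t ht; simp only [hfh, if_neg ht]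
  have hin : ∀ t : ℝ, t ∈ Set.Ioo b c → fh t = g t := by
    intro t ht; simp only [hfh, if_pos ht]
  have hflip : ∀ x ∈ Set.Icc (0:ℝ) T, ∀ y ∈ Set.Icc (0:ℝ) T,
      dist (f x) (f y) ≤ dist x y := by
    intro x hx y hy
    have := hf.dist_le_mul x hx y hy
    simpa using this
  have hbmem : b ∈ Set.Icc (0:ℝ) T := ⟨hb, by linarith⟩
  have hcmem : c ∈ Set.Icc (0:ℝ) T := ⟨by linarith, hcT⟩
  have key : ∀ x ∈ Set.Icc (0:ℝ) T, ∀ y ∈ Set.Icc (0:ℝ) T, x ≤ y →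
      |fh y - fh x| ≤ y - x := by
    intro x hx y hy hxy
    by_cases hxm : x ∈ Set.Ioo b c <;> by_cases hym : y ∈ Set.Ioo b c
    · -- both in
      rw [hin x hxm, hin y hym]
      have := hg y x
      rwa [abs_of_nonneg (by linarith : (0:ℝ) ≤ y - x)] at this
    · -- x in, y out: y ≥ c
      have hby : b < y := lt_of_lt_of_le hxm.1 hxy
      have hyc : c ≤ y := not_lt.mp (fun h => hym ⟨hby, h⟩)
      rw [hin x hxm, hout y hym]
      have h1 : |f y - f c| ≤ y - c := by
        have := hflip y hy c hcmem
        rw [Real.dist_eq, Real.dist_eq, abs_of_nonneg (by linarith : (0:ℝ) ≤ y - c)] at this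
        exact this
      have h2 : |g c - g x| ≤ c - x := by
        have := hg c x
        rwa [abs_of_nonneg (by linarith [hxm.2] : (0:ℝ) ≤ c - x)] at this
      calc |f y - g x| = |(f y - f c) + (g c - g x)| := by rw [hgc c (by linarith)]; ring_nf
        _ ≤ |f y - f c| + |g c - g x| := abs_add_le _ _
        _ ≤ (y - c) + (c - x) := add_le_add h1 h2
        _ = y - x := by ring
    · -- x out, y in: x ≤ b
      have hxc : x < c := lt_of_le_of_lt hxy hym.2
      have hxb : x ≤ b := not_lt.mp (fun h => hxm ⟨h, hxc⟩)
      rw [hout x hxm, hin y hym]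
      have h1 : |g y - g b| ≤ y - b := by
        have := hg y b
        rwa [abs_of_nonneg (by linarith [hym.1] : (0:ℝ) ≤ y - b)] at this
      have h2 : |f b - f x| ≤ b - x := by
        have := hflip b hbmem x hx
        rw [Real.dist_eq, Real.dist_eq, abs_of_nonneg (by linarith : (0:ℝ) ≤ b - x)] at this
        exact this
      calc |g y - f x| = |(g y - g b) + (f b - f x)| := by rw [hgb]; ring_nf
        _ ≤ |g y - g b| + |f b - f x| := abs_add_le _ _
        _ ≤ (y - b) + (b - x) := add_le_add h1 h2
        _ = y - x := by ring
    · -- both out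
      rw [hout x hxm, hout y hym]
      have := hflip y hy x hx
      rw [Real.dist_eq, Real.dist_eq, abs_of_nonneg (by linarith : (0:ℝ) ≤ y - x)] at this
      exact this
  refine ⟨e, he0, fh, ?_, hout, ?_, ?_, fun t ht => hout t (by simp [Set.mem_Ioo]; intro; linarith)⟩
  · apply LipschitzOnWith.of_dist_le_mul
    intro x hx y hy
    rcases le_total x y with h | h
    · have := key x hx y hy h
      rw [Real.dist_eq, Real.dist_eq, abs_sub_comm (fh x) (fh y),
        abs_of_nonpos (by linarith : x - y ≤ 0)]
      push_cast
      linarith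
    · have := key y hy x hx h
      rw [Real.dist_eq, Real.dist_eq, abs_of_nonneg (by linarith : (0:ℝ) ≤ x - y)]
      push_cast
      linarith
  · -- fh (c - e) = f c
    have hce : c - e = b + d := by simp only [he]; ring
    by_cases hm : c - e ∈ Set.Ioo b c
    · rw [hin _ hm, hgc _ hce.ge]
    · have hd0' : d = 0 := by
        rw [hce] at hm
        rw [Set.mem_Ioo, not_and_or, not_lt, not_lt] at hm
        rcases hm with h | h <;> linarith
      have hfcb : f c = f b := by
        have : |f c - f b| = 0 := hd0'
        have := abs_eq_zero.mp this; linarith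
      rw [hout _ hm, hce, hd0', add_zero, hfcb]
  · -- constant on [c - e, c]
    intro t ht
    have hce : c - e = b + d := by simp only [he]; ring
    by_cases hm : t ∈ Set.Ioo b c
    · rw [hin t hm, hgc t (by rw [← hce]; exact ht.1)]
    · rw [hout t hm]
      rw [Set.mem_Ioo, not_and_or, not_lt, not_lt] at hm
      rcases hm with h | h
      · have hd0' : d = 0 := by rw [hce] at ht; linarith [ht.1]
        have htb : t = b := by rw [hce, hd0', add_zero] at ht; linarith [ht.1]
        have : |f c - f b| = 0 := hd0'
        have := abs_eq_zero.mp this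
        rw [htb]; linarith
      · have : t = c := le_antisymm ht.2 h
        rw [this]
end
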